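/- arXiv:1405.6681 — 3 statements merged into one kernel-verified Lean document; each statement's English description precedes it below -/
import Mathlib

section
/- If q is a primitive N-th root of unity then the element E^N is primitive in the braided Hopf algebra k⟨E⟩ of diagonal type with braiding constant q: Δ(E^N) = E^N ⊗ 1 + 1 ⊗ E^N. -/
/-!
If `y * x = q • (x * y)`, expanding `(x + y) ^ n` gives Gaussian binomial coefficients:
`(x + y) ^ n = ∑_{a + b = n} [a + b choose a]_q • x ^ a * y ^ b`. These satisfy
`[a + b choose a]_q * (q; q)_a * (q; q)_b = (q; q)_{a + b}`. When `q` is a primitive `N`-th root of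
unity, `(q; q)_N` contains the factor `1 - q ^ N = 0` while `(q; q)_a` and `(q; q)_b` are nonzero
for `a, b < N`, so every mixed term of `(x + y) ^ N` vanishes and `(x + y) ^ N = x ^ N + y ^ N`.
Apply this to `x = ι₁ E`, `y = ι₂ E`.
-/

open Finset

theorem Finset.Nat.sum_antidiagonal_succ_of_pascal {M : Type*} [AddCommMonoid M] (n : ℕ)
    (u v w : ℕ → ℕ → M) (h_left : ∀ b, w 0 (b + 1) = v 0 b) (h_right : ∀ a, w (a + 1) 0 = u a 0)
    (h_succ : ∀ a b, w (a + 1) (b + 1) = u a (b + 1) + v (a + 1) b) :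
    ∑ p ∈ antidiagonal (n + 1), w p.1 p.2 =
      ∑ p ∈ antidiagonal n, u p.1 p.2 + ∑ p ∈ antidiagonal n, v p.1 p.2 := by
  cases n with
  | zero => simp [Nat.sum_antidiagonal_succ, h_left, h_right, add_comm]
  | succ m =>
    rw [Nat.sum_antidiagonal_succ, Nat.sum_antidiagonal_succ', Nat.sum_antidiagonal_succ',
      Nat.sum_antidiagonal_succ]
    simp only [h_left, h_right, h_succ, sum_add_distrib]
    abel

section qBinomial

variable {R : Type*}

/-- `qBinomial q a b` is the Gaussian binomial coefficient `[a + b choose a]_q`. -/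
def qBinomial [Semiring R] (q : R) : ℕ → ℕ → R
  | 0, _ => 1
  | _ + 1, 0 => 1
  | a + 1, b + 1 => qBinomial q a (b + 1) + q ^ (a + 1) * qBinomial q (a + 1) b

/-- The `q`-Pochhammer symbol `(q; q)ₙ`. -/
def qPochhammer [CommRing R] (q : R) (n : ℕ) : R :=
  ∏ i ∈ range n, (1 - q ^ (i + 1))

@[simp] theorem qBinomial_zero_left [Semiring R] (q : R) (b : ℕ) : qBinomial q 0 b = 1 := by
  simp [qBinomial]

@[simp] theorem qBinomial_zero_right [Semiring R] (q : R) (a : ℕ) : qBinomial q a 0 = 1 := by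
  cases a <;> simp [qBinomial]

theorem qBinomial_succ_succ [Semiring R] (q : R) (a b : ℕ) :
    qBinomial q (a + 1) (b + 1) = qBinomial q a (b + 1) + q ^ (a + 1) * qBinomial q (a + 1) b := by
  rw [qBinomial]

theorem qPochhammer_succ [CommRing R] (q : R) (n : ℕ) :
    qPochhammer q (n + 1) = qPochhammer q n * (1 - q ^ (n + 1)) :=
  prod_range_succ _ n

theorem qBinomial_mul_qPochhammer [CommRing R] (q : R) :
    ∀ a b : ℕ, qBinomial q a b * qPochhammer q a * qPochhammer q b = qPochhammer q (a + b)
  | 0, b => by simp [qPochhammer]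
  | a + 1, 0 => by simp [qPochhammer]
  | a + 1, b + 1 => by
    have ih₁ := qBinomial_mul_qPochhammer q a (b + 1)
    have ih₂ := qBinomial_mul_qPochhammer q (a + 1) b
    rw [show a + (b + 1) = a + b + 1 by omega, qPochhammer_succ q b] at ih₁
    rw [show a + 1 + b = a + b + 1 by omega, qPochhammer_succ q a] at ih₂
    rw [show a + 1 + (b + 1) = a + b + 1 + 1 by omega, qBinomial_succ_succ,
      qPochhammer_succ q a, qPochhammer_succ q b, qPochhammer_succ q (a + b + 1)]
    linear_combination (1 - q ^ (a + 1)) * ih₁ + q ^ (a + 1) * (1 - q ^ (b + 1)) * ih₂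

theorem qPochhammer_ne_zero [CommRing R] [IsDomain R] {q : R} {N n : ℕ}
    (hq : IsPrimitiveRoot q N) (hn : n < N) : qPochhammer q n ≠ 0 :=
  prod_ne_zero_iff.2 fun i hi ↦ sub_ne_zero.2 <|
    (hq.pow_ne_one_of_pos_of_lt i.succ_ne_zero (by simp at hi; omega)).symm

theorem qPochhammer_eq_zero [CommRing R] {q : R} {N : ℕ} (hq : IsPrimitiveRoot q N) (hN : 0 < N) :
    qPochhammer q N = 0 := by
  obtain ⟨n, rfl⟩ := Nat.exists_eq_succ_of_ne_zero hN.ne'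
  rw [qPochhammer_succ, hq.pow_eq_one, sub_self, mul_zero]

theorem qBinomial_eq_zero [CommRing R] [IsDomain R] {q : R} {a b : ℕ}
    (hq : IsPrimitiveRoot q (a + b)) (ha : 0 < a) (hb : 0 < b) : qBinomial q a b = 0 := by
  have h := qBinomial_mul_qPochhammer q a b
  rw [qPochhammer_eq_zero hq (by omega)] at h
  simpa [qPochhammer_ne_zero hq (show a < a + b by omega),
    qPochhammer_ne_zero hq (show b < a + b by omega)] using h

end qBinomial

section TwistedCommutation

variable {A : Type*} [Semiring A] {x y : A}

theorem mul_pow_eq_smul_pow_mul {R : Type*} [CommSemiring R] [Algebra R A] {q : R}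
    (h : y * x = q • (x * y)) :
    ∀ k : ℕ, y * x ^ k = q ^ k • (x ^ k * y)
  | 0 => by simp
  | k + 1 => by
    rw [pow_succ, ← mul_assoc, mul_pow_eq_smul_pow_mul h k, smul_mul_assoc, mul_assoc, h,
      mul_smul_comm, smul_smul, ← mul_assoc, ← pow_succ, ← pow_succ]

theorem add_pow_eq_sum_qBinomial {R : Type*} [CommSemiring R] [Algebra R A] {q : R}
    (h : y * x = q • (x * y)) (n : ℕ) :
    (x + y) ^ n = ∑ p ∈ antidiagonal n, qBinomial q p.1 p.2 • (x ^ p.1 * y ^ p.2) := by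
  induction n with
  | zero => simp
  | succ n ih =>
    rw [pow_succ', ih, add_mul, mul_sum, mul_sum]
    symm
    refine Nat.sum_antidiagonal_succ_of_pascal n
      (fun a b ↦ x * (qBinomial q a b • (x ^ a * y ^ b)))
      (fun a b ↦ y * (qBinomial q a b • (x ^ a * y ^ b)))
      (fun a b ↦ qBinomial q a b • (x ^ a * y ^ b)) (fun b ↦ ?_) (fun a ↦ ?_) (fun a b ↦ ?_)
    · simp [pow_succ']
    · simp [pow_succ']
    · rw [qBinomial_succ_succ, add_smul, mul_smul_comm, mul_smul_comm, ← mul_assoc, ← pow_succ',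
        ← mul_assoc, mul_pow_eq_smul_pow_mul h, smul_mul_assoc, smul_smul, mul_assoc, ← pow_succ',
        mul_comm (qBinomial q (a + 1) b)]

theorem add_pow_eq_pow_add_pow_of_isPrimitiveRoot {R : Type*} [CommRing R] [IsDomain R]
    [Algebra R A] {q : R} {N : ℕ} (h : y * x = q • (x * y)) (hq : IsPrimitiveRoot q N)
    (hN : 0 < N) : (x + y) ^ N = x ^ N + y ^ N := by
  rw [add_pow_eq_sum_qBinomial h, sum_eq_add_of_mem (N, 0) (0, N) (by simp) (by simp)
    (by simp [hN.ne'])]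
  · simp
  rintro ⟨a, b⟩ hab ⟨hne₁, hne₂⟩
  rw [HasAntidiagonal.mem_antidiagonal] at hab
  subst hab
  dsimp only
  rw [qBinomial_eq_zero hq (by grind) (by grind), zero_smul]

end TwistedCommutation

/-- `A` plays the role of the braided tensor square `B ⊗ B`, with `ι₁ x = x ⊗ 1` and
`ι₂ y = 1 ⊗ y`; `htwist` is the braided product rule `(1 ⊗ E)(E ⊗ 1) = q • (E ⊗ E)`. -/
theorem pow_primitive_of_primitiveRoot {𝕜 B A : Type*} [Field 𝕜]
    [Ring B] [Algebra 𝕜 B] [Ring A] [Algebra 𝕜 A]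
    (q : 𝕜) (N : ℕ) (hq : IsPrimitiveRoot q N) (hN : 1 ≤ N)
    (E : B) (Δ ι₁ ι₂ : B →ₐ[𝕜] A)
    (hprim : Δ E = ι₁ E + ι₂ E)
    (htwist : ι₂ E * ι₁ E = q • (ι₁ E * ι₂ E)) :
    Δ (E ^ N) = ι₁ (E ^ N) + ι₂ (E ^ N) := by
  rw [map_pow, hprim, add_pow_eq_pow_add_pow_of_isPrimitiveRoot htwist hq hN, map_pow, map_pow]
end

section
/- In the algebra U(V), for j ≠ i and N ∈ ℕ, the element E_{j,N}^+ defined recursively by E_{j,0}^+ = E_j and E_{j,m+1}^+ = E_i E_{j,m}^+ − (K_i · E_{j,m}^+) E_i satisfies E_{j,N}^+ F_i − F_i E_{j,N}^+ = (N)_{q_{ii}} (q_{ii}^{N−1} q_{ij}q_{ji} − 1) L_i E_{j,N−1}^+. -/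
/-- The q-number `(n)_q = 1 + q + ⋯ + q^{n-1}`. -/
def qNat {k : Type*} [Field k] (q : k) (n : ℕ) : k := ∑ j ∈ Finset.range n, q ^ j

/-!
Both `K_i` and `L_i` skew-commute with every `E_{j,m}^+`, with scalars read off from its degree
`α_j + m α_i`. Expanding `[E_{j,m+1}^+, F_i]` by the Leibniz rule therefore leaves two kinds of
terms: those containing `[E_{j,m}^+, F_i]`, which by induction is a multiple of `L_i E_{j,m-1}^+`
and recombine (after moving `L_i` to the front) into a multiple of `L_i E_{j,m}^+`, and those
containing `[E_i, F_i] = K_i - L_i`, where the `K_i`-parts cancel precisely because of the twist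
in the definition of `E_{j,m+1}^+`. The coefficients then obey the recursion of the `q`-numbers.
-/

theorem qNat_add_two_mul {k : Type*} [Field k] (q Q : k) (n : ℕ) :
    qNat q (n + 2) * (q ^ (n + 1) * Q - 1)
      = q * (qNat q (n + 1) * (q ^ n * Q - 1)) + (Q * q ^ (2 * (n + 1)) - 1) := by
  have h₁ : qNat q (n + 2) = q * qNat q (n + 1) + 1 := geom_sum_succ
  have h₂ : qNat q (n + 2) = q ^ (n + 1) + qNat q (n + 1) := geom_sum_succ'
  rw [h₁]
  linear_combination (Q * q ^ (n + 1)) * (h₁.symm.trans h₂)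

section

variable {k A : Type*} [CommRing k] [Ring A] [Algebra k A]

def QCommute (q : k) (a b : A) : Prop := a * b = q • (b * a)

namespace QCommute

variable {p q : k} {x a b : A}

theorem mul_left_comm (h : QCommute q x a) (y : A) : x * (a * y) = q • (a * (x * y)) := by
  rw [← _root_.mul_assoc, h, smul_mul_assoc, _root_.mul_assoc]

theorem mul_right (ha : QCommute p x a) (hb : QCommute q x b) : QCommute (p * q) x (a * b) := by
  rw [QCommute, ← _root_.mul_assoc, ha, smul_mul_assoc, _root_.mul_assoc, hb, mul_smul_comm,
    smul_smul, _root_.mul_assoc]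

theorem sub (ha : QCommute q x a) (hb : QCommute q x b) : QCommute q x (a - b) := by
  rw [QCommute, mul_sub, sub_mul, ha, hb, smul_sub]

theorem smul_right (h : QCommute q x a) (c : k) : QCommute q x (c • a) := by
  rw [QCommute, mul_smul_comm, h, smul_mul_assoc, smul_comm]

theorem of_twistedAd {p r : k} {x e y : A} {c : ℕ → k} {s : ℕ → A}
    (hs0 : s 0 = y) (hsS : ∀ m, s (m + 1) = e * s m - c m • (s m * e))
    (he : QCommute p x e) (hy : QCommute r x y) (m : ℕ) : QCommute (r * p ^ m) x (s m) := by
  induction m with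
  | zero => simpa [hs0] using hy
  | succ m ih =>
    rw [hsS, show r * p ^ (m + 1) = p * (r * p ^ m) by ring]
    refine (he.mul_right ih).sub (QCommute.smul_right ?_ _)
    rw [mul_comm p]
    exact ih.mul_right he

end QCommute

theorem lie_twistedAd_succ {c : ℕ → k} {s : ℕ → A} {e f : A}
    (hsS : ∀ m, s (m + 1) = e * s m - c m • (s m * e)) (n : ℕ) :
    ⁅s (n + 1), f⁆
      = e * ⁅s n, f⁆ - c n • (⁅s n, f⁆ * e) + (⁅e, f⁆ * s n - c n • (s n * ⁅e, f⁆)) := by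
  simp only [hsS, Ring.lie_def, sub_mul, mul_sub, smul_mul_assoc, mul_smul_comm, smul_sub,
    mul_assoc]
  abel

end

theorem QCommute.inv_symm {k A : Type*} [Field k] [Ring A] [Algebra k A] {q : k} {a b : A}
    (hq : q ≠ 0) (h : QCommute q a b) : QCommute q⁻¹ b a := by
  rw [QCommute, h, smul_smul, inv_mul_cancel₀ hq, one_smul]

section Ead

variable {k A : Type*} [Field k] [Ring A] [Algebra k A] {qii qij qji : k} {Ei Ej Fi Ki Li : A}
  {Ead : ℕ → A}

theorem lie_Ead_succ (hEadS : ∀ m, Ead (m + 1) = Ei * Ead m - (qij * qii ^ m) • (Ead m * Ei))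
    (hEiFi : ⁅Ei, Fi⁆ = Ki - Li) (n : ℕ) (hKi : QCommute (qij * qii ^ n) Ki (Ead n))
    (hLi : QCommute (qji * qii ^ n) (Ead n) Li) :
    ⁅Ead (n + 1), Fi⁆ = Ei * ⁅Ead n, Fi⁆ - (qij * qii ^ n) • (⁅Ead n, Fi⁆ * Ei)
      + (qij * qji * qii ^ (2 * n) - 1) • (Li * Ead n) := by
  rw [lie_twistedAd_succ hEadS, hEiFi, sub_mul, mul_sub, hKi, hLi]
  module

theorem lie_Ead_succ_eq_smul (hEad0 : Ead 0 = Ej)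
    (hEadS : ∀ m, Ead (m + 1) = Ei * Ead m - (qij * qii ^ m) • (Ead m * Ei))
    (hEiFi : ⁅Ei, Fi⁆ = Ki - Li) (hEjFi : ⁅Ej, Fi⁆ = 0) (hEiLi : QCommute qii Ei Li)
    (hKiEad : ∀ m, QCommute (qij * qii ^ m) Ki (Ead m))
    (hEadLi : ∀ m, QCommute (qji * qii ^ m) (Ead m) Li) (n : ℕ) :
    ⁅Ead (n + 1), Fi⁆ = (qNat qii (n + 1) * (qii ^ n * (qij * qji) - 1)) • (Li * Ead n) := by
  induction n with
  | zero =>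
    rw [lie_Ead_succ hEadS hEiFi 0 (hKiEad 0) (hEadLi 0), hEad0, hEjFi]
    simp [qNat]
  | succ n ih =>
    have hLiEad : Ei * (Li * Ead n) - (qij * qii ^ (n + 1)) • (Li * Ead n * Ei)
        = qii • (Li * Ead (n + 1)) := by
      rw [hEadS, hEiLi.mul_left_comm, mul_sub, mul_smul_comm, mul_assoc]
      module
    rw [lie_Ead_succ hEadS hEiFi (n + 1) (hKiEad _) (hEadLi _), ih, mul_smul_comm, smul_mul_assoc,
      qNat_add_two_mul]
    linear_combination (norm := module) (qNat qii (n + 1) * (qii ^ n * (qij * qji) - 1)) • hLiEad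

end Ead

/-- In the algebra `U(V)` with the quantum double relations, for `j ≠ i`, the elements
`E_{j,N}^+` defined by `E_{j,0}^+ = E_j` and
`E_{j,m+1}^+ = E_i E_{j,m}^+ − (K_i · E_{j,m}^+) E_i`, where the conjugation
`K_i · E_{j,m}^+ = K_i E_{j,m}^+ K_i^{-1} = q_{ij} q_{ii}^m E_{j,m}^+` (as `E_{j,m}^+` has
degree `α_j + m α_i`), satisfy
`E_{j,N}^+ F_i − F_i E_{j,N}^+ = (N)_{q_ii} (q_ii^{N−1} q_{ij} q_{ji} − 1) L_i E_{j,N−1}^+`. -/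
theorem Ead_commutator_F {k A : Type*} [Field k] [Ring A] [Algebra k A]
    (qii qij qji : k) (hqii : qii ≠ 0) (hqji : qji ≠ 0)
    (Ei Ej Fi Ki Li : A) (Ead : ℕ → A)
    (hEad0 : Ead 0 = Ej)
    (hEadS : ∀ m, Ead (m + 1) = Ei * Ead m - (qij * qii ^ m) • (Ead m * Ei))
    (hEiFi : Ei * Fi - Fi * Ei = Ki - Li)
    (hEjFi : Ej * Fi = Fi * Ej)
    (hKiEi : Ki * Ei = qii • (Ei * Ki))
    (hKiEj : Ki * Ej = qij • (Ej * Ki))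
    (hLiEi : Li * Ei = qii⁻¹ • (Ei * Li))
    (hLiEj : Li * Ej = qji⁻¹ • (Ej * Li)) :
    ∀ N : ℕ, 1 ≤ N →
      Ead N * Fi - Fi * Ead N =
        (qNat qii N * (qii ^ (N - 1) * (qij * qji) - 1)) • (Li * Ead (N - 1)) := by
  have hEiLi : QCommute qii Ei Li := by
    simpa using QCommute.inv_symm (inv_ne_zero hqii) hLiEi
  have hEadLi (m : ℕ) : QCommute (qji * qii ^ m) (Ead m) Li := by
    have hLiEad := QCommute.of_twistedAd hEad0 hEadS hLiEi hLiEj m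
    simpa [mul_inv, inv_pow, mul_comm] using hLiEad.inv_symm (by simp [hqii, hqji])
  rintro (_ | n) hN
  · omega
  · exact lie_Ead_succ_eq_smul hEad0 hEadS hEiFi (sub_eq_zero.mpr hEjFi) hEiLi
      (QCommute.of_twistedAd hEad0 hEadS hKiEi hKiEj) hEadLi n
end

section
/- In the distinguished pre-Nichols algebra of super type A, the iterated adjoint elements E_{j,k} = (ad_c E_j)⋯(ad_c E_{k−1}) E_k satisfy the coproduct formula Δ(E_{j,k}) = E_{j,k}⊗1 + 1⊗E_{j,k} + Σ_{j≤ℓ<k} (1 − q_{ℓ,ℓ+1}q_{ℓ+1,ℓ}) E_{j,ℓ} ⊗ E_{ℓ+1,k}. -/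
/-- The iterated braided adjoint elements `E_{j,k} = (ad_c E_j) ⋯ (ad_c E_{k−1}) E_k` of a
diagonal braided vector space: `E_{j,j} = E_j` and
`E_{j,k} = E_j E_{j+1,k} − χ(α_j, α_{j+1} + ⋯ + α_k) E_{j+1,k} E_j`,
where `χ(α_j, α_{j+1} + ⋯ + α_k) = ∏_{l=j+1}^{k} q_{jl}`. -/
noncomputable def EE (𝕜 : Type*) [Field 𝕜] {B : Type*} [Ring B] [Algebra 𝕜 B]
    (E : ℕ → B) (q : ℕ → ℕ → 𝕜) (j kk : ℕ) : B :=
  if h : kk ≤ j then E j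
  else E j * EE 𝕜 E q (j + 1) kk -
    (∏ l ∈ Finset.Icc (j + 1) kk, q j l) • (EE 𝕜 E q (j + 1) kk * E j)
termination_by kk - j
decreasing_by omega

/-! Since `Δ` is an algebra map and `E_j` is primitive,
`Δ(E_{j,k}) = ad_c(E_j ⊗ 1 + 1 ⊗ E_j)(Δ E_{j+1,k})` with `c = χ(α_j, α_{j+1} + ⋯ + α_k)`, and
`Δ E_{j+1,k}` is expanded by induction on `k - j`. Each resulting term is settled by a
`q`-commutation. `1 ⊗ E_j` `q`-commutes with `E_{j+1,l} ⊗ 1` by the braiding and with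
`1 ⊗ E_{l+1,k}` by the relations `E_j E_i = q_{ji} E_i E_j` (`i ≥ j + 2`), so `ad_c(1 ⊗ E_j)` kills
every term except `1 ⊗ E_{j+1,k}`. Moving `1 ⊗ E_{l+1,k}` past `E_j ⊗ 1` costs `∏_{i > l} q_{ij}`,
which cancels the matching factor of `c` because `q_{ji} q_{ij} = 1` for `i ≥ j + 2`; what remains
is `ad(E_j ⊗ 1)(E_{j+1,l} ⊗ 1) (1 ⊗ E_{l+1,k}) = E_{j,l} ⊗ E_{l+1,k}`, and for `l = j` only the
factor `q_{j,j+1} q_{j+1,j}` survives, giving the new summand. -/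

open Finset

theorem prod_Icc_eq_mul_prod_Icc_add_one {M : Type*} [CommMonoid M] (f : ℕ → M) {a b : ℕ}
    (h : a ≤ b) : ∏ i ∈ Icc a b, f i = f a * ∏ i ∈ Icc (a + 1) b, f i := by
  rw [Icc_add_one_left_eq_Ioc, mul_prod_Ioc_eq_prod_Icc h]

section SkewCommute

variable {R A A' : Type*} [CommSemiring R] [Semiring A] [Algebra R A] [Semiring A'] [Algebra R A']

def SkewCommute (c : R) (x y : A) : Prop := x * y = c • (y * x)

namespace SkewCommute

variable {c d : R} {x y z : A}

theorem mul_right (h₁ : SkewCommute c x y) (h₂ : SkewCommute d x z) :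
    SkewCommute (c * d) x (y * z) := by
  unfold SkewCommute at *
  rw [← mul_assoc, h₁, smul_mul_assoc, mul_assoc, h₂, mul_smul_comm, smul_smul, mul_assoc]

theorem mul_left (h₁ : SkewCommute c x z) (h₂ : SkewCommute d y z) :
    SkewCommute (c * d) (x * y) z := by
  unfold SkewCommute at *
  rw [mul_assoc, h₂, mul_smul_comm, ← mul_assoc, h₁, smul_mul_assoc, smul_smul, mul_comm d,
    mul_assoc]

theorem smul_right (h : SkewCommute c x y) (e : R) : SkewCommute c x (e • y) := by
  unfold SkewCommute at *
  rw [mul_smul_comm, h, smul_mul_assoc, smul_comm]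

theorem smul_left (h : SkewCommute c x y) (e : R) : SkewCommute c (e • x) y := by
  unfold SkewCommute at *
  rw [smul_mul_assoc, h, mul_smul_comm, smul_comm]

theorem map (h : SkewCommute c x y) (f : A →ₐ[R] A') : SkewCommute c (f x) (f y) := by
  unfold SkewCommute at *
  rw [← map_mul, h, map_smul, map_mul]

end SkewCommute

end SkewCommute

section BraidedAd

variable {R A A' : Type*} [CommRing R] [Ring A] [Algebra R A] [Ring A'] [Algebra R A']

def braidedAd (c : R) (x : A) : A →ₗ[R] A := LinearMap.mulLeft R x - c • LinearMap.mulRight R x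

variable {c d : R} {x y z : A}

theorem braidedAd_apply : braidedAd c x y = x * y - c • (y * x) := rfl

theorem braidedAd_eq_zero_iff : braidedAd c x y = 0 ↔ SkewCommute c x y := sub_eq_zero

theorem braidedAd_add_left (x' : A) :
    braidedAd c (x + x') y = braidedAd c x y + braidedAd c x' y := by
  simp only [braidedAd_apply, add_mul, mul_add, smul_add]
  abel

theorem map_braidedAd (f : A →ₐ[R] A') : f (braidedAd c x y) = braidedAd c (f x) (f y) := by
  simp only [braidedAd_apply, map_sub, map_smul, map_mul]

theorem braidedAd_one_right : braidedAd c x 1 = (1 - c) • x := by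
  rw [braidedAd_apply, mul_one, one_mul, sub_smul, one_smul]

theorem braidedAd_mul_of_skewCommute (h : SkewCommute d y x) :
    braidedAd c x (z * y) = braidedAd (c * d) x z * y := by
  rw [braidedAd_apply, braidedAd_apply, mul_assoc z, h, mul_smul_comm, smul_smul, sub_mul,
    smul_mul_assoc, mul_assoc, mul_assoc]

theorem SkewCommute.sub_right (h₁ : SkewCommute c x y) (h₂ : SkewCommute c x z) :
    SkewCommute c x (y - z) := by
  unfold SkewCommute at *
  rw [mul_sub, h₁, h₂, sub_mul, smul_sub]

theorem SkewCommute.sub_left (h₁ : SkewCommute c x z) (h₂ : SkewCommute c y z) :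
    SkewCommute c (x - y) z := by
  unfold SkewCommute at *
  rw [sub_mul, h₁, h₂, mul_sub, smul_sub]

theorem SkewCommute.braidedAd_right (h₁ : SkewCommute c x y) (h₂ : SkewCommute d x z) (e : R) :
    SkewCommute (c * d) x (braidedAd e y z) :=
  (h₁.mul_right h₂).sub_right (mul_comm c d ▸ (h₂.mul_right h₁).smul_right e)

theorem SkewCommute.braidedAd_left (h₁ : SkewCommute c y x) (h₂ : SkewCommute d z x) (e : R) :
    SkewCommute (c * d) (braidedAd e y z) x :=
  (h₁.mul_left h₂).sub_left (mul_comm c d ▸ (h₂.mul_left h₁).smul_left e)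

end BraidedAd

section IteratedAd

variable {𝕜 A A' : Type*} [Field 𝕜] [Ring A] [Algebra 𝕜 A] [Ring A'] [Algebra 𝕜 A']
  (E : ℕ → A) (q : ℕ → ℕ → 𝕜)

theorem EE_self (j : ℕ) : EE 𝕜 E q j j = E j := by
  rw [EE, dif_pos le_rfl]

theorem EE_of_lt {j k : ℕ} (h : j < k) :
    EE 𝕜 E q j k = braidedAd (∏ l ∈ Icc (j + 1) k, q j l) (E j) (EE 𝕜 E q (j + 1) k) := by
  rw [EE, dif_neg (not_le.2 h), braidedAd_apply]

theorem map_EE (f : A →ₐ[𝕜] A') {j k : ℕ} (h : j ≤ k) :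
    f (EE 𝕜 E q j k) = EE 𝕜 (f ∘ E) q j k := by
  induction h using Nat.decreasingInduction with
  | self => rw [EE_self, EE_self, Function.comp_apply]
  | of_succ j hj ih => rw [EE_of_lt _ _ hj, EE_of_lt _ _ hj, map_braidedAd, ih, Function.comp_apply]

variable {E q}

theorem SkewCommute.EE_right {c : ℕ → 𝕜} {x : A} {a b : ℕ} (hab : a ≤ b)
    (h : ∀ i ∈ Icc a b, SkewCommute (c i) x (E i)) :
    SkewCommute (∏ i ∈ Icc a b, c i) x (EE 𝕜 E q a b) := by
  induction hab using Nat.decreasingInduction with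
  | self => simpa [EE_self] using h b
  | of_succ a ha ih =>
    rw [EE_of_lt _ _ ha, prod_Icc_eq_mul_prod_Icc_add_one c ha.le]
    exact (h a (by simp [ha.le])).braidedAd_right
      (ih fun i hi => h i (Icc_subset_Icc_left a.le_succ hi)) _

theorem SkewCommute.EE_left {c : ℕ → 𝕜} {x : A} {a b : ℕ} (hab : a ≤ b)
    (h : ∀ i ∈ Icc a b, SkewCommute (c i) (E i) x) :
    SkewCommute (∏ i ∈ Icc a b, c i) (EE 𝕜 E q a b) x := by
  induction hab using Nat.decreasingInduction with
  | self => simpa [EE_self] using h b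
  | of_succ a ha ih =>
    rw [EE_of_lt _ _ ha, prod_Icc_eq_mul_prod_Icc_add_one c ha.le]
    exact (h a (by simp [ha.le])).braidedAd_left
      (ih fun i hi => h i (Icc_subset_Icc_left a.le_succ hi)) _

end IteratedAd

section SuperTypeA

variable {𝕜 B A : Type*} [Field 𝕜] [Ring B] [Algebra 𝕜 B] [Ring A] [Algebra 𝕜 A]
  {θ : ℕ} {q : ℕ → ℕ → 𝕜} {E : ℕ → B} {ι₁ ι₂ : B →ₐ[𝕜] A}

theorem prod_mul_prod_swap_eq_one (hsuper : ∀ i j, i + 1 < j → j ≤ θ → q i j * q j i = 1)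
    {j m k : ℕ} (hm : j + 2 ≤ m) (hk : k ≤ θ) :
    (∏ i ∈ Icc m k, q j i) * ∏ i ∈ Icc m k, q i j = 1 := by
  rw [← prod_mul_distrib]
  exact prod_eq_one fun i hi => hsuper j i (by grind) (by grind)

theorem prod_mul_prod_swap_eq_of_lt (hsuper : ∀ i j, i + 1 < j → j ≤ θ → q i j * q j i = 1)
    {j k : ℕ} (hjk : j < k) (hk : k ≤ θ) :
    (∏ i ∈ Icc (j + 1) k, q j i) * ∏ i ∈ Icc (j + 1) k, q i j = q j (j + 1) * q (j + 1) j := by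
  rw [← prod_mul_distrib, prod_Icc_eq_mul_prod_Icc_add_one _ hjk, prod_mul_distrib,
    prod_mul_prod_swap_eq_one hsuper le_rfl hk, mul_one]

theorem skewCommute_ι₂_E_ι₁_EE
    (htwist : ∀ i j, ι₂ (E i) * ι₁ (E j) = q i j • (ι₁ (E j) * ι₂ (E i))) (j : ℕ) {a b : ℕ}
    (hab : a ≤ b) : SkewCommute (∏ i ∈ Icc a b, q j i) (ι₂ (E j)) (ι₁ (EE 𝕜 E q a b)) := by
  rw [map_EE _ _ _ hab]
  exact SkewCommute.EE_right hab fun i _ => htwist j i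

theorem skewCommute_ι₂_EE_ι₁_E
    (htwist : ∀ i j, ι₂ (E i) * ι₁ (E j) = q i j • (ι₁ (E j) * ι₂ (E i))) (j : ℕ) {a b : ℕ}
    (hab : a ≤ b) : SkewCommute (∏ i ∈ Icc a b, q i j) (ι₂ (EE 𝕜 E q a b)) (ι₁ (E j)) := by
  rw [map_EE _ _ _ hab]
  exact SkewCommute.EE_left hab fun i _ => htwist i j

theorem braidedAd_primitive_ι₁_EE
    (htwist : ∀ i j, ι₂ (E i) * ι₁ (E j) = q i j • (ι₁ (E j) * ι₂ (E i))) {j k : ℕ}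
    (hjk : j < k) :
    braidedAd (∏ i ∈ Icc (j + 1) k, q j i) (ι₁ (E j) + ι₂ (E j)) (ι₁ (EE 𝕜 E q (j + 1) k)) =
      ι₁ (EE 𝕜 E q j k) := by
  rw [braidedAd_add_left, braidedAd_eq_zero_iff.2 (skewCommute_ι₂_E_ι₁_EE htwist j hjk),
    add_zero, EE_of_lt _ _ hjk, map_braidedAd]

theorem braidedAd_primitive_ι₂_EE
    (hsuper : ∀ i j, i + 1 < j → j ≤ θ → q i j * q j i = 1)
    (htwist : ∀ i j, ι₂ (E i) * ι₁ (E j) = q i j • (ι₁ (E j) * ι₂ (E i)))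
    {j k : ℕ} (hjk : j < k) (hk : k ≤ θ) :
    braidedAd (∏ i ∈ Icc (j + 1) k, q j i) (ι₁ (E j) + ι₂ (E j)) (ι₂ (EE 𝕜 E q (j + 1) k)) =
      ι₂ (EE 𝕜 E q j k) +
        (1 - q j (j + 1) * q (j + 1) j) • (ι₁ (E j) * ι₂ (EE 𝕜 E q (j + 1) k)) := by
  have h := braidedAd_mul_of_skewCommute (c := ∏ i ∈ Icc (j + 1) k, q j i) (z := 1)
    (skewCommute_ι₂_EE_ι₁_E htwist j hjk)
  rw [one_mul] at h
  rw [braidedAd_add_left, h, braidedAd_one_right, prod_mul_prod_swap_eq_of_lt hsuper hjk hk,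
    smul_mul_assoc, EE_of_lt _ _ hjk, map_braidedAd, add_comm]

theorem braidedAd_primitive_ι₁_EE_mul_ι₂_EE
    (hsuper : ∀ i j, i + 1 < j → j ≤ θ → q i j * q j i = 1)
    (hrel : ∀ i j, i + 2 ≤ j → j ≤ θ → E i * E j = q i j • (E j * E i))
    (htwist : ∀ i j, ι₂ (E i) * ι₁ (E j) = q i j • (ι₁ (E j) * ι₂ (E i)))
    {j l k : ℕ} (hjl : j < l) (hlk : l < k) (hk : k ≤ θ) :
    braidedAd (∏ i ∈ Icc (j + 1) k, q j i) (ι₁ (E j) + ι₂ (E j))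
        (ι₁ (EE 𝕜 E q (j + 1) l) * ι₂ (EE 𝕜 E q (l + 1) k)) =
      ι₁ (EE 𝕜 E q j l) * ι₂ (EE 𝕜 E q (l + 1) k) := by
  have hsplit : ∏ i ∈ Icc (j + 1) k, q j i =
      (∏ i ∈ Icc (j + 1) l, q j i) * ∏ i ∈ Icc (l + 1) k, q j i := by
    simp only [Icc_add_one_left_eq_Ioc, prod_Ioc_consecutive _ hjl.le hlk.le]
  have hright : SkewCommute (∏ i ∈ Icc (l + 1) k, q j i) (ι₂ (E j)) (ι₂ (EE 𝕜 E q (l + 1) k)) :=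
    (SkewCommute.EE_right hlk fun i hi => hrel j i (by grind) (by grind)).map ι₂
  have hleft := skewCommute_ι₂_E_ι₁_EE htwist j (a := j + 1) (b := l) hjl
  rw [braidedAd_add_left, braidedAd_mul_of_skewCommute (skewCommute_ι₂_EE_ι₁_E htwist j hlk),
    hsplit, braidedAd_eq_zero_iff.2 (hleft.mul_right hright), add_zero, mul_assoc,
    prod_mul_prod_swap_eq_one hsuper (by omega) hk, mul_one, EE_of_lt _ _ hjl, map_braidedAd]

end SuperTypeA

/-- `A` models the braided tensor square `B ⊗ B`, with `ι₁ x = x ⊗ 1`, `ι₂ y = 1 ⊗ y`, and `htwist`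
the rule for multiplying them. -/
theorem coproduct_EE_superTypeA {𝕜 B A : Type*} [Field 𝕜]
    [Ring B] [Algebra 𝕜 B] [Ring A] [Algebra 𝕜 A]
    (θ : ℕ) (q : ℕ → ℕ → 𝕜) (E : ℕ → B)
    (Δ ι₁ ι₂ : B →ₐ[𝕜] A)
    (hsuper : ∀ i j, i + 1 < j → j ≤ θ → q i j * q j i = 1)
    (hrel : ∀ i j, i + 2 ≤ j → j ≤ θ → E i * E j = q i j • (E j * E i))
    (hprim : ∀ i, Δ (E i) = ι₁ (E i) + ι₂ (E i))
    (htwist : ∀ i j, ι₂ (E i) * ι₁ (E j) = q i j • (ι₁ (E j) * ι₂ (E i))) :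
    ∀ j kk, 1 ≤ j → j ≤ kk → kk ≤ θ →
      Δ (EE 𝕜 E q j kk) =
        ι₁ (EE 𝕜 E q j kk) + ι₂ (EE 𝕜 E q j kk) +
          ∑ l ∈ Finset.Ico j kk,
            (1 - q l (l + 1) * q (l + 1) l) •
              (ι₁ (EE 𝕜 E q j l) * ι₂ (EE 𝕜 E q (l + 1) kk)) := by
  rintro j k - hjk hk
  induction hjk using Nat.decreasingInduction with
  | self => simp [EE_self, hprim]
  | of_succ j hj ih =>
    have hΔ : Δ (EE 𝕜 E q j k) = braidedAd (∏ i ∈ Icc (j + 1) k, q j i) (ι₁ (E j) + ι₂ (E j))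
        (Δ (EE 𝕜 E q (j + 1) k)) := by
      rw [EE_of_lt _ _ hj, map_braidedAd, hprim]
    have hsummand : ∀ l ∈ Ico (j + 1) k,
        braidedAd (∏ i ∈ Icc (j + 1) k, q j i) (ι₁ (E j) + ι₂ (E j))
          ((1 - q l (l + 1) * q (l + 1) l) • (ι₁ (EE 𝕜 E q (j + 1) l) * ι₂ (EE 𝕜 E q (l + 1) k))) =
        (1 - q l (l + 1) * q (l + 1) l) • (ι₁ (EE 𝕜 E q j l) * ι₂ (EE 𝕜 E q (l + 1) k)) :=
      fun l hl => by
        rw [map_smul,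
          braidedAd_primitive_ι₁_EE_mul_ι₂_EE hsuper hrel htwist (by grind) (by grind) hk]
    rw [hΔ, ih, map_add, map_add, map_sum, sum_congr rfl hsummand,
      braidedAd_primitive_ι₁_EE htwist hj, braidedAd_primitive_ι₂_EE hsuper htwist hj hk,
      sum_eq_sum_Ico_succ_bot hj, EE_self]
    abel
end
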